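/- Let G be a locally compact group and let H be a group of automorphisms of G. Then the action of H on the coset space G/Res_G(H) is distal, where Res_G(H) is the discrete residual of H, i.e. the intersection of all open H-invariant subgroups of G. -/

import Mathlib

open Topology

/-- The discrete residual of a group `H` of automorphisms of `G`: the intersection of all
open `H`-invariant subgroups of `G`. -/
def discreteResidual {G : Type*} [Group G] [TopologicalSpace G]
    (H : Subgroup (MulAut G)) : Subgroup G :=
  sInf {O : Subgroup G | IsOpen (O : Set G) ∧ ∀ h ∈ H, ⇑h '' (O : Set G) = (O : Set G)}

/-!
Two distinct cosets `xR ≠ yR` of the residual `R` are already separated by some open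
`H`-invariant subgroup `O ⊇ R`, i.e. `xO ≠ yO`. By invariance, `h(x)O ≠ h(y)O` for every
`h ∈ H`. Since `O` is open, `G/O` is discrete, so "lying in the same `O`-coset" is an open
relation on `G/R`: it is a neighbourhood of every diagonal point `(z, z)` that avoids all the
pairs `(h(x)R, h(y)R)`.
-/

namespace QuotientGroup

variable {G : Type*} [Group G]

theorem mk_map_eq_mk_map_iff {O : Subgroup G} {h : MulAut G} (hO : ⇑h '' (O : Set G) = O)
    (x y : G) :
    (mk (h x) : G ⧸ O) = mk (h y) ↔ (mk x : G ⧸ O) = mk y := by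
  rw [QuotientGroup.eq, QuotientGroup.eq, ← map_inv, ← map_mul, ← SetLike.mem_coe, ← hO,
    h.injective.mem_set_image, SetLike.mem_coe]

variable [TopologicalSpace G] [SeparatelyContinuousMul G]

theorem isOpen_setOf_quotientMapOfLE_eq {R O : Subgroup G} (hRO : R ≤ O)
    (hO : IsOpen (O : Set G)) :
    IsOpen {p : (G ⧸ R) × (G ⧸ R) |
      Subgroup.quotientMapOfLE hRO p.1 = Subgroup.quotientMapOfLE hRO p.2} := by
  have := discreteTopology hO
  have hπ : Continuous (Subgroup.quotientMapOfLE hRO) := continuous_id.quotient_map' _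
  exact (isOpen_discrete {q : (G ⧸ O) × (G ⧸ O) | q.1 = q.2}).preimage (hπ.prodMap hπ)

end QuotientGroup

theorem exists_isOpen_invariant_notMem_of_notMem_discreteResidual {G : Type*} [Group G]
    [TopologicalSpace G] {H : Subgroup (MulAut G)} {g : G} (hg : g ∉ discreteResidual H) :
    ∃ O : Subgroup G, IsOpen (O : Set G) ∧ (∀ h ∈ H, ⇑h '' (O : Set G) = O) ∧
      g ∉ O := by
  simpa [discreteResidual, Subgroup.mem_sInf, and_assoc] using hg

theorem distal_on_quotient_by_discreteResidual_general {G : Type*} [Group G] [TopologicalSpace G]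
    [IsTopologicalGroup G] (H : Subgroup (MulAut G)) :
    ∀ x y : G, (QuotientGroup.mk x : G ⧸ discreteResidual H) ≠ QuotientGroup.mk y →
      ¬ ∃ z : G ⧸ discreteResidual H, (z, z) ∈ closure
        {p : (G ⧸ discreteResidual H) × (G ⧸ discreteResidual H) |
          ∃ h ∈ H, p = (QuotientGroup.mk (h x), QuotientGroup.mk (h y))} := by
  rintro x y hxy ⟨z, hz⟩
  obtain ⟨O, hOopen, hOinv, hxyO⟩ :=
    exists_isOpen_invariant_notMem_of_notMem_discreteResidual (mt QuotientGroup.eq.mpr hxy)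
  have hRO : discreteResidual H ≤ O := sInf_le ⟨hOopen, hOinv⟩
  set π := Subgroup.quotientMapOfLE hRO
  have horbit : {p : (G ⧸ discreteResidual H) × (G ⧸ discreteResidual H) |
      ∃ h ∈ H, p = (QuotientGroup.mk (h x), QuotientGroup.mk (h y))} ⊆
      {p | π p.1 = π p.2}ᶜ := by
    rintro _ ⟨h, hH, rfl⟩ hsame
    exact hxyO <| QuotientGroup.eq.mp <|
      (QuotientGroup.mk_map_eq_mk_map_iff (hOinv h hH) x y).mp hsame
  exact closure_minimal horbit
    (QuotientGroup.isOpen_setOf_quotientMapOfLE_eq hRO hOopen).isClosed_compl hz rfl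

/-- Let `G` be a locally compact group and `H` a group of automorphisms of `G`.  Then the
action of `H` on the coset space `G / Res_G(H)` is distal: for distinct cosets `xR ≠ yR`
there is no net `(h_i)` in `H` with `h_i • xR` and `h_i • yR` converging to a common coset
(equivalently, no diagonal point `(z, z)` lies in the closure of the set of pairs
`(h(x)R, h(y)R)` for `h ∈ H`). -/
theorem distal_on_quotient_by_discreteResidual {G : Type*} [Group G] [TopologicalSpace G]
    [IsTopologicalGroup G] [LocallyCompactSpace G] (H : Subgroup (MulAut G))
    (hcont : ∀ h ∈ H, Continuous ⇑h) :
    ∀ x y : G, (QuotientGroup.mk x : G ⧸ discreteResidual H) ≠ QuotientGroup.mk y →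
      ¬ ∃ z : G ⧸ discreteResidual H, (z, z) ∈ closure
        {p : (G ⧸ discreteResidual H) × (G ⧸ discreteResidual H) |
          ∃ h ∈ H, p = (QuotientGroup.mk (h x), QuotientGroup.mk (h y))} :=
  distal_on_quotient_by_discreteResidual_general H
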